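/- Let H ∈ (0, 1/2), α ∈ (0, H), and let α_H be a fixed nonzero constant. Then there exists a constant C > 0, depending only on H, α and α_H, such that for every continuous function g_B : [0,1] → ℝⁿ, the function g_w : (0,∞) → ℝⁿ defined by g_w(t) = α_H (1/2 − H) ∫₀^{min(t,1)} (t − s)^{−1/2−H} g_B(s) ds satisfies ‖g_w‖_α ≤ C · sup_{t ∈ [0,1]} ‖g_B(t)‖. -/

import Mathlib

open MeasureTheory Set
open scoped ENNReal

/-- The squared weighted norm `‖g‖_α² = ∫₀^∞ (1+t)^{2α} ‖g(t)‖² dt`, as an extended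
nonnegative real. -/
noncomputable def alphaNormSq {E : Type*} [NormedAddCommGroup E] (α : ℝ) (g : ℝ → E) :
    ℝ≥0∞ :=
  ∫⁻ t in Set.Ioi (0 : ℝ), ENNReal.ofReal ((1 + t) ^ (2 * α) * ‖g t‖ ^ 2)

/-!
For `p = -1/2 - H ∈ (-1, 0)` the kernel `s ↦ (t - s)^p` has mass
`∫₀^{min(t,1)} (t-s)^p ds = O((1+t)^p)` on `t > 0`: for `t ≤ 2` it is bounded by the exact
value `t^{p+1}/(p+1)`, and for `t ≥ 2` by its largest value `(t-1)^p ≤ ((1+t)/3)^p` on `[0,1]`.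
Hence `‖g_w(t)‖ ≤ A sup ‖g_B‖ (1+t)^p`, and `(1+t)^{2α+2p}` is integrable on `(0,∞)`
exactly because `α < H`.
-/

namespace FractionalKernel

variable {p : ℝ}

theorem intervalIntegrable_sub_rpow (hp : -1 < p) (t a b : ℝ) :
    IntervalIntegrable (fun s => (t - s) ^ p) volume a b := by
  simpa using
    (intervalIntegral.intervalIntegrable_rpow' (a := t - a) (b := t - b) hp).comp_sub_left t

theorem integral_sub_rpow (hp : -1 < p) (t u : ℝ) :
    ∫ s in (0 : ℝ)..u, (t - s) ^ p = (t ^ (p + 1) - (t - u) ^ (p + 1)) / (p + 1) := by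
  rw [intervalIntegral.integral_comp_sub_left (fun x => x ^ p) t, sub_zero,
    integral_rpow (Or.inl hp)]

theorem integral_sub_rpow_min_one_le (hp : -1 < p) (hp0 : p ≤ 0) {t : ℝ} (ht : 0 < t) :
    ∫ s in (0 : ℝ)..min t 1, (t - s) ^ p ≤ 2 / ((p + 1) * 3 ^ p) * (1 + t) ^ p := by
  have hq : 0 < p + 1 := by linarith
  have hdecay : 2 / ((p + 1) * 3 ^ p) * (1 + t) ^ p = 2 / (p + 1) * ((1 + t) / 3) ^ p := by
    rw [Real.div_rpow (by linarith) (by norm_num)]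
    field_simp
  rw [hdecay]
  rcases le_or_gt t 2 with ht2 | ht2
  · have hmass : t ^ (p + 1) ≤ 2 :=
      calc t ^ (p + 1) ≤ 2 ^ (p + 1) := Real.rpow_le_rpow ht.le ht2 hq.le
        _ ≤ 2 ^ (1 : ℝ) := Real.rpow_le_rpow_of_exponent_le one_le_two (by linarith)
        _ = 2 := Real.rpow_one 2
    have htail : 0 ≤ (t - min t 1) ^ (p + 1) :=
      Real.rpow_nonneg (sub_nonneg.2 (min_le_left _ _)) _
    have hweight : 1 ≤ ((1 + t) / 3) ^ p :=
      Real.one_le_rpow_of_pos_of_le_one_of_nonpos (by positivity) (by linarith) hp0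
    calc ∫ s in (0 : ℝ)..min t 1, (t - s) ^ p
        = (t ^ (p + 1) - (t - min t 1) ^ (p + 1)) / (p + 1) := integral_sub_rpow hp t _
      _ ≤ 2 / (p + 1) := by gcongr; linarith
      _ ≤ 2 / (p + 1) * ((1 + t) / 3) ^ p := le_mul_of_one_le_right (by positivity) hweight
  · rw [min_eq_right (by linarith)]
    calc ∫ s in (0 : ℝ)..1, (t - s) ^ p
        ≤ ∫ _ in (0 : ℝ)..1, (t - 1) ^ p :=
          intervalIntegral.integral_mono_on zero_le_one (intervalIntegrable_sub_rpow hp t 0 1)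
            intervalIntegrable_const fun s hs =>
              Real.rpow_le_rpow_of_nonpos (by linarith) (by linarith [hs.2]) hp0
      _ = (t - 1) ^ p := by simp
      _ ≤ ((1 + t) / 3) ^ p := Real.rpow_le_rpow_of_nonpos (by positivity) (by linarith) hp0
      _ ≤ 2 / (p + 1) * ((1 + t) / 3) ^ p :=
          le_mul_of_one_le_left (by positivity) ((one_le_div hq).2 (by linarith))

variable {E : Type*} [NormedAddCommGroup E] [NormedSpace ℝ E]

theorem norm_integral_sub_rpow_smul_le (hp : -1 < p) {g : ℝ → E} {M t u : ℝ} (hu : 0 ≤ u)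
    (hut : u ≤ t) (hg : ∀ s ∈ Ioc 0 u, ‖g s‖ ≤ M) :
    ‖∫ s in (0 : ℝ)..u, (t - s) ^ p • g s‖ ≤ M * ∫ s in (0 : ℝ)..u, (t - s) ^ p := by
  rw [← intervalIntegral.integral_const_mul]
  refine intervalIntegral.norm_integral_le_of_norm_le hu (ae_of_all _ fun s hs => ?_)
    ((intervalIntegrable_sub_rpow hp t 0 u).const_mul M)
  have hkernel : 0 ≤ (t - s) ^ p := Real.rpow_nonneg (by linarith [hs.2]) _
  rw [norm_smul, Real.norm_of_nonneg hkernel, mul_comm M]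
  exact mul_le_mul_of_nonneg_left (hg s hs) hkernel

theorem norm_smul_integral_sub_rpow_smul_min_one_le (hp : -1 < p) (hp0 : p ≤ 0) (a : ℝ)
    {g : ℝ → E} {M t : ℝ} (hg : ∀ s ∈ Icc 0 1, ‖g s‖ ≤ M) (ht : 0 < t) :
    ‖(a * (p + 1)) • ∫ s in (0 : ℝ)..min t 1, (t - s) ^ p • g s‖ ≤
      2 * |a| / 3 ^ p * M * (1 + t) ^ p := by
  have hq : 0 < p + 1 := by linarith
  have hM : 0 ≤ M := (norm_nonneg _).trans (hg 0 ⟨le_rfl, zero_le_one⟩)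
  rw [norm_smul, Real.norm_eq_abs, abs_mul, abs_of_pos hq]
  calc |a| * (p + 1) * ‖∫ s in (0 : ℝ)..min t 1, (t - s) ^ p • g s‖
      ≤ |a| * (p + 1) * (M * ∫ s in (0 : ℝ)..min t 1, (t - s) ^ p) := by
        gcongr
        exact norm_integral_sub_rpow_smul_le hp (le_min ht.le zero_le_one) (min_le_left _ _)
          fun s hs => hg s ⟨hs.1.le, hs.2.trans (min_le_right _ _)⟩
    _ ≤ |a| * (p + 1) * (M * (2 / ((p + 1) * 3 ^ p) * (1 + t) ^ p)) := by
        gcongr; exact integral_sub_rpow_min_one_le hp hp0 ht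
    _ = 2 * |a| / 3 ^ p * M * (1 + t) ^ p := by field_simp

end FractionalKernel

theorem alphaNormSq_rpow_half_le {E : Type*} [NormedAddCommGroup E] {α p A : ℝ} {f : ℝ → E}
    (hαp : 2 * α + 2 * p < -1) (hA : 0 ≤ A)
    (hf : ∀ t ∈ Ioi (0 : ℝ), ‖f t‖ ≤ A * (1 + t) ^ p) :
    alphaNormSq α f ^ ((1 : ℝ) / 2) ≤
      ENNReal.ofReal (A * √(∫ t in Ioi (0 : ℝ), (1 + t) ^ (2 * α + 2 * p))) := by
  set I := ∫ t in Ioi (0 : ℝ), (1 + t) ^ (2 * α + 2 * p)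
  have hint : IntegrableOn (fun t : ℝ => (1 + t) ^ (2 * α + 2 * p)) (Ioi 0) := by
    simpa only [add_comm] using integrableOn_add_rpow_Ioi_of_lt hαp (by norm_num : -(1 : ℝ) < 0)
  have hpointwise : ∀ t ∈ Ioi (0 : ℝ),
      (1 + t) ^ (2 * α) * ‖f t‖ ^ 2 ≤ A ^ 2 * (1 + t) ^ (2 * α + 2 * p) := by
    intro t ht
    have h1t : (0 : ℝ) ≤ 1 + t := by linarith [mem_Ioi.1 ht]
    calc (1 + t) ^ (2 * α) * ‖f t‖ ^ 2 ≤ (1 + t) ^ (2 * α) * (A * (1 + t) ^ p) ^ 2 := by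
          gcongr; exact hf t ht
      _ = A ^ 2 * (1 + t) ^ (2 * α + 2 * p) := by
          rw [Real.rpow_add' h1t (by linarith), mul_comm 2 p, Real.rpow_mul h1t p 2, Real.rpow_two]
          ring
  have hsq : alphaNormSq α f ≤ ENNReal.ofReal (A ^ 2 * I) :=
    calc alphaNormSq α f
        ≤ ∫⁻ t in Ioi (0 : ℝ), ENNReal.ofReal (A ^ 2 * (1 + t) ^ (2 * α + 2 * p)) :=
          setLIntegral_mono' measurableSet_Ioi fun t ht =>
            ENNReal.ofReal_le_ofReal (hpointwise t ht)
      _ = ENNReal.ofReal (A ^ 2 * I) := by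
          rw [← integral_const_mul, ofReal_integral_eq_lintegral_ofReal (hint.const_mul _)]
          filter_upwards [ae_restrict_mem measurableSet_Ioi] with t ht
          have : (0 : ℝ) < 1 + t := by linarith [mem_Ioi.1 ht]
          positivity
  have hI : 0 ≤ I := setIntegral_nonneg measurableSet_Ioi fun t ht => by
    have : (0 : ℝ) < 1 + t := by linarith [mem_Ioi.1 ht]
    positivity
  calc alphaNormSq α f ^ ((1 : ℝ) / 2) ≤ ENNReal.ofReal (A ^ 2 * I) ^ ((1 : ℝ) / 2) :=
        ENNReal.rpow_le_rpow hsq (by norm_num)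
    _ = ENNReal.ofReal (A * √I) := by
        rw [ENNReal.ofReal_rpow_of_nonneg (by positivity) (by norm_num), ← Real.sqrt_eq_rpow,
          Real.sqrt_mul (sq_nonneg A), Real.sqrt_sq hA]

theorem stmt14_general (n : ℕ) (H α αH : ℝ) (hH : H ∈ Set.Ioo (0 : ℝ) (1 / 2))
    (hα : α ∈ Set.Ioo (0 : ℝ) H) :
    ∃ C : ℝ, 0 < C ∧ ∀ gB : ℝ → EuclideanSpace ℝ (Fin n),
      ContinuousOn gB (Set.Icc 0 1) →
      (alphaNormSq α fun t : ℝ =>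
          (αH * ((1 : ℝ) / 2 - H)) •
            ∫ s in (0 : ℝ)..(min t 1), ((t - s) ^ (-(1 : ℝ) / 2 - H)) • gB s) ^
          ((1 : ℝ) / 2) ≤
        ENNReal.ofReal (C * ⨆ t : Set.Icc (0 : ℝ) 1, ‖gB t‖) := by
  set p : ℝ := -(1 : ℝ) / 2 - H with hp_def
  have hp : -1 < p := by linarith [hH.2]
  have hp0 : p ≤ 0 := by linarith [hH.1]
  have hαp : 2 * α + 2 * p < -1 := by linarith [hα.2]
  have hq : (1 : ℝ) / 2 - H = p + 1 := by ring
  set c : ℝ := 2 * |αH| / 3 ^ p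
  set I : ℝ := ∫ t in Ioi (0 : ℝ), (1 + t) ^ (2 * α + 2 * p)
  refine ⟨c * √I + 1, by positivity, fun gB hgB => ?_⟩
  set M : ℝ := ⨆ t : Icc (0 : ℝ) 1, ‖gB t‖
  have hbdd : BddAbove (range fun t : Icc (0 : ℝ) 1 => ‖gB t‖) := by
    simpa only [image_eq_range] using isCompact_Icc.bddAbove_image hgB.norm
  have hgM : ∀ s ∈ Icc (0 : ℝ) 1, ‖gB s‖ ≤ M := fun s hs => le_ciSup hbdd ⟨s, hs⟩
  have hM : 0 ≤ M := (norm_nonneg _).trans (hgM 0 ⟨le_rfl, zero_le_one⟩)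
  rw [hq]
  calc _ ≤ ENNReal.ofReal (c * M * √I) :=
        alphaNormSq_rpow_half_le hαp (by positivity) fun t ht =>
          FractionalKernel.norm_smul_integral_sub_rpow_smul_min_one_le hp hp0 αH hgM ht
    _ ≤ ENNReal.ofReal ((c * √I + 1) * M) :=
        ENNReal.ofReal_le_ofReal (by nlinarith [Real.sqrt_nonneg I])

/-- Lemma 5.2 (case `H < 1/2`): for continuous `g_B : [0,1] → ℝⁿ`, the function
`g_w(t) = α_H (1/2-H) ∫₀^{min(t,1)} (t-s)^{-1/2-H} g_B(s) ds` satisfies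
`‖g_w‖_α ≤ C sup_{t ∈ [0,1]} ‖g_B(t)‖`, with `C` depending only on `H`, `α`, `α_H`. -/
theorem stmt14 (n : ℕ) (H α αH : ℝ) (hH : H ∈ Set.Ioo (0 : ℝ) (1 / 2))
    (hα : α ∈ Set.Ioo (0 : ℝ) H) (hαH : αH ≠ 0) :
    ∃ C : ℝ, 0 < C ∧ ∀ gB : ℝ → EuclideanSpace ℝ (Fin n),
      ContinuousOn gB (Set.Icc 0 1) →
      (alphaNormSq α fun t : ℝ =>
          (αH * ((1 : ℝ) / 2 - H)) •
            ∫ s in (0 : ℝ)..(min t 1), ((t - s) ^ (-(1 : ℝ) / 2 - H)) • gB s) ^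
          ((1 : ℝ) / 2) ≤
        ENNReal.ofReal (C * ⨆ t : Set.Icc (0 : ℝ) 1, ‖gB t‖) :=
  stmt14_general n H α αH hH hα
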